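/- For every C₀ > 0 there exist constants c > 0 and c' > 0 such that for all ε ∈ (0,1], for all λ > 0 with (1 − λ)² ≤ C₀ ε, and for all F ∈ ℝ^{2×2} with det F ≥ 0, one has W_λ(F) ≥ c · dist²(F, SO(2)) − c' · ε. -/
import Mathlib

set_option maxHeartbeats 1000000


open Matrix

/-- Euclidean norm on `ℝ²`. -/
noncomputable def vnorm (v : Fin 2 → ℝ) : ℝ := Real.sqrt (v 0 ^ 2 + v 1 ^ 2)

/-- The three unit bond directions of the equilateral triangular lattice. -/
noncomputable def ebond : Fin 3 → (Fin 2 → ℝ) :=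
  ![![1, 0], ![1 / 2, Real.sqrt 3 / 2], ![-(1 / 2), Real.sqrt 3 / 2]]

/-- The cell energy density `W_λ`. -/
noncomputable def Wcell (l : ℝ) (F : Matrix (Fin 2) (Fin 2) ℝ) : ℝ :=
  (vnorm (F.mulVec (ebond 0)) - l) ^ 2 + (vnorm (F.mulVec (ebond 1)) - l) ^ 2 +
    (vnorm (F.mulVec (ebond 2)) - l) ^ 2

/-- `SO(2)`: real orthogonal `2 × 2` matrices with determinant one. -/
def SO2 : Set (Matrix (Fin 2) (Fin 2) ℝ) :=
  {R | R.transpose * R = 1 ∧ R.det = 1}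

/-- Frobenius norm of a `2 × 2` real matrix. -/
noncomputable def frob (A : Matrix (Fin 2) (Fin 2) ℝ) : ℝ :=
  Real.sqrt (∑ i : Fin 2, ∑ j : Fin 2, (A i j) ^ 2)

/-- Distance (w.r.t. the Frobenius norm) from a matrix to a set of matrices. -/
noncomputable def distToSet (F : Matrix (Fin 2) (Fin 2) ℝ)
    (S : Set (Matrix (Fin 2) (Fin 2) ℝ)) : ℝ :=
  sInf ((fun G => frob (F - G)) '' S)

lemma frob_sq (A : Matrix (Fin 2) (Fin 2) ℝ) :
    frob A ^ 2 = ∑ i : Fin 2, ∑ j : Fin 2, (A i j) ^ 2 :=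
  Real.sq_sqrt (by positivity)

lemma distToSet_nonneg (F : Matrix (Fin 2) (Fin 2) ℝ) : 0 ≤ distToSet F SO2 := by
  apply Real.sInf_nonneg
  rintro x ⟨G, -, rfl⟩
  exact Real.sqrt_nonneg _

lemma dist_sq_le (F R : Matrix (Fin 2) (Fin 2) ℝ) (hR : R ∈ SO2) :
    distToSet F SO2 ^ 2 ≤ frob (F - R) ^ 2 := by
  have h : distToSet F SO2 ≤ frob (F - R) :=
    csInf_le ⟨0, by rintro x ⟨G, -, rfl⟩; exact Real.sqrt_nonneg _⟩ ⟨R, hR, rfl⟩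
  exact pow_le_pow_left₀ (distToSet_nonneg F) h 2

lemma lrange (l : ℝ) (h : (l - 1) ^ 2 ≤ 1 / 100) :
    (9 / 10 ≤ l ∧ l ≤ 11 / 10) ∧ (81 / 100 ≤ l ^ 2 ∧ l ^ 2 ≤ 121 / 100) := by
  have h1 : 9 / 10 ≤ l := by nlinarith
  have h2 : l ≤ 11 / 10 := by nlinarith
  exact ⟨⟨h1, h2⟩, ⟨by nlinarith, by nlinarith⟩⟩

lemma tbound (t l : ℝ) (ht : 0 ≤ t) (hl9 : 9 / 10 ≤ l) (h : (t - l) ^ 2 ≤ l ^ 2 / 400) :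
    19 / 20 * l ≤ t ∧ t ≤ 21 / 20 * l := by
  constructor <;> nlinarith

lemma spos (t1 t2 t3 l s : ℝ) (hs2 : 2 * s = t1 ^ 2 + t2 ^ 2 - t3 ^ 2)
    (h1 : 19 / 20 * l ≤ t1) (h2 : 19 / 20 * l ≤ t2) (h3 : t3 ≤ 21 / 20 * l)
    (h3n : 0 ≤ t3) (hl : 9 / 10 ≤ l) : 0 < s := by
  nlinarith [mul_le_mul h1 h1 (by nlinarith) (by nlinarith : (0:ℝ) ≤ t1),
    mul_le_mul h2 h2 (by nlinarith) (by nlinarith : (0:ℝ) ≤ t2),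
    mul_le_mul h3 h3 h3n (by nlinarith)]

lemma sltP (t1 t2 s D : ℝ) (hlag : D ^ 2 + s ^ 2 = t1 ^ 2 * t2 ^ 2)
    (h1 : 0 < t1) (h2 : 0 < t2) : s ≤ t1 * t2 := by
  nlinarith [sq_nonneg D, mul_pos h1 h2]

lemma Pbounds (t1 t2 l : ℝ) (h1l : 19 / 20 * l ≤ t1) (h1u : t1 ≤ 21 / 20 * l)
    (h2l : 19 / 20 * l ≤ t2) (h2u : t2 ≤ 21 / 20 * l) (hl9 : 9 / 10 ≤ l) (hl11 : l ≤ 11 / 10) :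
    t1 * t2 ≤ 134 / 100 ∧ t1 ^ 2 * t2 ≤ 155 / 100 ∧ 62 / 100 ≤ t1 ^ 2 * t2 := by
  have ht1n : (0:ℝ) ≤ t1 := by nlinarith
  have ht2n : (0:ℝ) ≤ t2 := by nlinarith
  have hu : t1 ≤ 231 / 200 := by nlinarith
  have hu2 : t2 ≤ 231 / 200 := by nlinarith
  have hb : 171 / 200 ≤ t1 := by nlinarith
  have hb2 : 171 / 200 ≤ t2 := by nlinarith
  refine ⟨?_, ?_, ?_⟩
  · nlinarith [mul_le_mul hu hu2 ht2n (by norm_num : (0:ℝ) ≤ 231 / 200)]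
  · nlinarith [mul_le_mul (mul_le_mul hu hu ht1n (by norm_num : (0:ℝ) ≤ 231 / 200)) hu2 ht2n
      (by positivity : (0:ℝ) ≤ 231 / 200 * (231 / 200))]
  · nlinarith [mul_le_mul (mul_le_mul hb hb (by norm_num) ht1n) hb2 (by norm_num)
      (mul_nonneg ht1n ht1n)]

lemma brkbound (t1 t2 t3 l U : ℝ) (hU : U = (t1 - l) ^ 2 + (t2 - l) ^ 2 + (t3 - l) ^ 2) :
    3 * (t1 - 1) ^ 2 + (t1 - t2) ^ 2 + 3 * (t2 - 1) ^ 2 ≤ 14 * U + 12 * (l - 1) ^ 2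
      ∧ (1 - t1) ^ 2 ≤ 2 * U + 2 * (l - 1) ^ 2 := by
  constructor
  · nlinarith [sq_nonneg ((t1 - l) - (l - 1)), sq_nonneg ((t2 - l) - (l - 1)),
      sq_nonneg ((t1 - l) - (t2 - l)), sq_nonneg (t3 - l)]
  · nlinarith [sq_nonneg ((t1 - l) - (l - 1)), sq_nonneg (t2 - l), sq_nonneg (t3 - l)]

lemma easyE4 (p q r m t1 t2 t3 l W : ℝ)
    (hsum : t1 ^ 2 + t2 ^ 2 + t3 ^ 2 = 3 / 2 * (p ^ 2 + q ^ 2 + r ^ 2 + m ^ 2))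
    (hW : W = (t1 - l) ^ 2 + (t2 - l) ^ 2 + (t3 - l) ^ 2) :
    (p - 1) ^ 2 + q ^ 2 + r ^ 2 + (m - 1) ^ 2 ≤ 8 / 3 * W + 8 * l ^ 2 + 4 := by
  nlinarith [sq_nonneg (t1 - 2 * l), sq_nonneg (t2 - 2 * l), sq_nonneg (t3 - 2 * l),
    sq_nonneg (p + 1), sq_nonneg (m + 1)]

lemma lsq_far (l : ℝ) : l ^ 2 ≤ 2 + 2 * (l - 1) ^ 2 := by nlinarith [sq_nonneg (l - 2)]

/-- chord estimate in algebraic form -/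
lemma chord (P s X : ℝ) (hP : 0 < P) (hX : 0 ≤ X) (hs0 : 0 ≤ s) (hsP : s ≤ P)
    (hXsq : X ^ 2 = 3 * (P ^ 2 - s ^ 2) * P ^ 2) :
    P ^ 2 + 3 * s * P - 4 * s ^ 2 ≤ X := by
  rcases le_or_gt (P ^ 2 + 3 * s * P - 4 * s ^ 2) 0 with h | h
  · linarith
  · nlinarith [mul_nonneg (mul_nonneg (sq_nonneg (s - P / 2)) (by linarith : (0:ℝ) ≤ P - s))
      (by linarith : (0:ℝ) ≤ 2 * s + P)]

/-- bound on the shear variable -/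
lemma LW (t1 t2 t3 l : ℝ) (h1 : (t1 - l) ^ 2 ≤ l ^ 2 / 400) (h2 : (t2 - l) ^ 2 ≤ l ^ 2 / 400)
    (h3 : (t3 - l) ^ 2 ≤ l ^ 2 / 400) :
    (t1 ^ 2 + t2 ^ 2 - t3 ^ 2 - t1 * t2) ^ 2
      ≤ 13 * l ^ 2 * ((t1 - l) ^ 2 + (t2 - l) ^ 2 + (t3 - l) ^ 2) := by
  obtain ⟨u1, rfl⟩ : ∃ u, t1 = l + u := ⟨t1 - l, by ring⟩
  obtain ⟨u2, rfl⟩ : ∃ u, t2 = l + u := ⟨t2 - l, by ring⟩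
  obtain ⟨u3, rfl⟩ : ∃ u, t3 = l + u := ⟨t3 - l, by ring⟩
  have e1 : (l + u1 - l) ^ 2 = u1 ^ 2 := by ring
  have e2 : (l + u2 - l) ^ 2 = u2 ^ 2 := by ring
  have e3 : (l + u3 - l) ^ 2 = u3 ^ 2 := by ring
  rw [e1] at h1 ⊢; rw [e2] at h2 ⊢; rw [e3] at h3 ⊢
  obtain ⟨U, hUdef⟩ : ∃ x : ℝ, x = u1 ^ 2 + u2 ^ 2 + u3 ^ 2 := ⟨_, rfl⟩
  obtain ⟨v, hv⟩ : ∃ x : ℝ, x = u1 + u2 - 2 * u3 := ⟨_, rfl⟩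
  obtain ⟨Y, hY⟩ : ∃ x : ℝ, x = u1 ^ 2 + u2 ^ 2 - u3 ^ 2 - u1 * u2 := ⟨_, rfl⟩
  have hU : (0:ℝ) ≤ U := by rw [hUdef]; positivity
  have hw : (l + u1) ^ 2 + (l + u2) ^ 2 - (l + u3) ^ 2 - (l + u1) * (l + u2) = l * v + Y := by
    rw [hv, hY]; ring
  have hsplit : (l * v + Y) ^ 2 ≤ 2 * l ^ 2 * v ^ 2 + 2 * Y ^ 2 := by
    nlinarith [sq_nonneg (l * v - Y)]
  have hv6 : v ^ 2 ≤ 6 * U := by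
    rw [hv, hUdef]
    nlinarith [sq_nonneg (5 * u1 - u2 + 2 * u3), sq_nonneg (2 * u2 + u3)]
  have hYb : Y ≤ 3 / 2 * U := by rw [hY, hUdef]; nlinarith [sq_nonneg (u1 + u2), sq_nonneg u3]
  have hYb2 : -(3 / 2 * U) ≤ Y := by rw [hY, hUdef]; nlinarith [sq_nonneg (u1 - u2), sq_nonneg u3]
  have hY2 : Y ^ 2 ≤ 9 / 4 * U ^ 2 := by
    nlinarith [mul_nonneg (by linarith : (0:ℝ) ≤ 3 / 2 * U - Y) (by linarith : (0:ℝ) ≤ 3 / 2 * U + Y)]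
  have hUl : U ≤ 3 * (l ^ 2 / 400) := by rw [hUdef]; linarith
  have hU2 : U ^ 2 ≤ 3 * (l ^ 2 / 400) * U := by
    nlinarith [mul_nonneg hU (by linarith : (0:ℝ) ≤ 3 * (l ^ 2 / 400) - U)]
  have goal2 : (l * v + Y) ^ 2 ≤ 13 * l ^ 2 * U := by
    linarith [hsplit, mul_nonneg (sq_nonneg l) (by linarith : (0:ℝ) ≤ 6 * U - v ^ 2), hY2, hU2,
      mul_nonneg (sq_nonneg l) hU]
  rw [hw, ← hUdef]
  exact goal2

/-- Main analytic estimate in scalar form. -/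
lemma mainineq (s3 p q r m t1 t2 t3 l U : ℝ)
    (hs3 : s3 ^ 2 = 3) (hs3p : 0 < s3)
    (ht1 : t1 ^ 2 = p ^ 2 + r ^ 2)
    (ht2e : t2 ^ 2 = (p / 2 + s3 * q / 2) ^ 2 + (r / 2 + s3 * m / 2) ^ 2)
    (ht3e : t3 ^ 2 = (p / 2 + s3 * q / 2 - p) ^ 2 + (r / 2 + s3 * m / 2 - r) ^ 2)
    (ht1n : 0 ≤ t1) (ht2n : 0 ≤ t2) (ht3n : 0 ≤ t3)
    (hdet : 0 ≤ p * m - q * r)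
    (hl1 : (l - 1) ^ 2 ≤ 1 / 100) (hl : 0 < l)
    (hU : U = (t1 - l) ^ 2 + (t2 - l) ^ 2 + (t3 - l) ^ 2) (hUb : U ≤ l ^ 2 / 400) :
    (p - p / t1) ^ 2 + (q + r / t1) ^ 2 + (r - r / t1) ^ 2 + (m - p / t1) ^ 2
      ≤ 80 * U + 20 * (l - 1) ^ 2 := by
  obtain ⟨b0, hb0⟩ : ∃ x : ℝ, x = p / 2 + s3 * q / 2 := ⟨_, rfl⟩
  obtain ⟨b1, hb1⟩ : ∃ x : ℝ, x = r / 2 + s3 * m / 2 := ⟨_, rfl⟩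
  obtain ⟨s, hs⟩ : ∃ x : ℝ, x = p * b0 + r * b1 := ⟨_, rfl⟩
  obtain ⟨D, hD⟩ : ∃ x : ℝ, x = p * b1 - r * b0 := ⟨_, rfl⟩
  have ht2 : t2 ^ 2 = b0 ^ 2 + b1 ^ 2 := by rw [hb0, hb1]; exact ht2e
  have ht3 : t3 ^ 2 = (b0 - p) ^ 2 + (b1 - r) ^ 2 := by rw [hb0, hb1]; exact ht3e
  clear ht2e ht3e
  obtain ⟨⟨hl9, hl11⟩, ⟨hlsq1, hlsq2⟩⟩ := lrange l hl1
  have hUnn : 0 ≤ U := by rw [hU]; positivity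
  have h1 : (t1 - l) ^ 2 ≤ l ^ 2 / 400 := by
    linarith only [hU, hUb, sq_nonneg (t2 - l), sq_nonneg (t3 - l)]
  have h2 : (t2 - l) ^ 2 ≤ l ^ 2 / 400 := by
    linarith only [hU, hUb, sq_nonneg (t1 - l), sq_nonneg (t3 - l)]
  have h3 : (t3 - l) ^ 2 ≤ l ^ 2 / 400 := by
    linarith only [hU, hUb, sq_nonneg (t1 - l), sq_nonneg (t2 - l)]
  obtain ⟨t1lb, t1ub⟩ := tbound t1 l ht1n hl9 h1
  obtain ⟨t2lb, t2ub⟩ := tbound t2 l ht2n hl9 h2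
  obtain ⟨t3lb, t3ub⟩ := tbound t3 l ht3n hl9 h3
  have ht1pos : 0 < t1 := by linarith only [t1lb, hl9]
  have ht2pos : 0 < t2 := by linarith only [t2lb, hl9]
  have hDnn : 0 ≤ D := by
    have hD2 : D = s3 / 2 * (p * m - q * r) := by
      linear_combination hD + (-r) * hb0 + p * hb1
    rw [hD2]; exact mul_nonneg (by linarith only [hs3p]) hdet
  have hlag : D ^ 2 + s ^ 2 = t1 ^ 2 * t2 ^ 2 := by
    linear_combination (D + (p * b1 - r * b0)) * hD + (s + (p * b0 + r * b1)) * hs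
      + (-(t2 ^ 2)) * ht1 + (-(p ^ 2 + r ^ 2)) * ht2
  have hs2 : 2 * s = t1 ^ 2 + t2 ^ 2 - t3 ^ 2 := by
    linear_combination 2 * hs + (-1) * ht2 + (-1) * ht1 + ht3
  have hspos : 0 < s := spos t1 t2 t3 l s hs2 t1lb t2lb t3ub ht3n hl9
  have hsltP : s ≤ t1 * t2 := sltP t1 t2 s D hlag ht1pos ht2pos
  have hX : (s3 * D * (t1 * t2)) ^ 2 = 3 * ((t1 * t2) ^ 2 - s ^ 2) * (t1 * t2) ^ 2 := by
    linear_combination (D ^ 2 * (t1 * t2) ^ 2) * hs3 + (3 * (t1 * t2) ^ 2) * hlag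
  have hchord : (t1 * t2) ^ 2 + 3 * s * (t1 * t2) - 4 * s ^ 2 ≤ s3 * D * (t1 * t2) :=
    chord (t1 * t2) s _ (mul_pos ht1pos ht2pos)
      (mul_nonneg (mul_nonneg hs3p.le hDnn) (by positivity)) hspos.le hsltP hX
  have hw : (2 * s - t1 * t2) ^ 2 ≤ 13 * l ^ 2 * U := by
    have e : 2 * s - t1 * t2 = t1 ^ 2 + t2 ^ 2 - t3 ^ 2 - t1 * t2 := by
      linarith only [hs2]
    rw [e, hU]; exact LW t1 t2 t3 l h1 h2 h3
  have hid : 3 * ((p * t1 - p) ^ 2 + (q * t1 + r) ^ 2 + (r * t1 - r) ^ 2 + (m * t1 - p) ^ 2)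
      = 3 * (t1 - 1) ^ 2 * t1 ^ 2 + t1 ^ 2 * (4 * t2 ^ 2 - 4 * s + t1 ^ 2 + 3)
        - 4 * s3 * t1 * D := by
    linear_combination (4 * t1 * s3) * hD + (4 * t1 ^ 2) * hs + (-4 * t1 ^ 2) * ht2
      + (-4 * t1 ^ 2 * b0 - 4 * r * t1 * s3 - 2 * q * t1 ^ 2 * s3 + 2 * p * t1 ^ 2) * hb0
      + (-4 * t1 ^ 2 * b1 - 2 * m * t1 ^ 2 * s3 + 2 * r * t1 ^ 2 + 4 * p * t1 * s3) * hb1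
      + (-6 + 6 * t1 - 4 * t1 ^ 2 + 3 * m ^ 2 - m ^ 2 * s3 ^ 2 + 3 * q ^ 2 - q ^ 2 * s3 ^ 2) * ht1
      + (-(r ^ 2 * m ^ 2) - 2 * q * r * t1 - q ^ 2 * r ^ 2 + 2 * p * m * t1 - p ^ 2 * m ^ 2
          - p ^ 2 * q ^ 2) * hs3
  obtain ⟨hbrk, h1t1⟩ := brkbound t1 t2 t3 l U hU
  have hbrknn : 0 ≤ 3 * (t1 - 1) ^ 2 + (t1 - t2) ^ 2 + 3 * (t2 - 1) ^ 2 := by positivity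
  obtain ⟨hPb, ht1squb, ht1sqlb⟩ := Pbounds t1 t2 l t1lb t1ub t2lb t2ub hl9 hl11
  have hPnn : 0 ≤ t1 * t2 := by positivity
  have hwb : (2 * s - t1 * t2) ^ 2 ≤ 13 * (121 / 100) * U := by
    linarith only [hw, hUnn,
      mul_nonneg (by linarith only [hlsq2] : (0:ℝ) ≤ 121 / 100 - l ^ 2) hUnn]
  have hkey2 : t2 * (3 * (t1 - 1) ^ 2 * t1 ^ 2 + t1 ^ 2 * (4 * t2 ^ 2 - 4 * s + t1 ^ 2 + 3))
        - 4 * ((t1 * t2) ^ 2 + 3 * s * (t1 * t2) - 4 * s ^ 2)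
      ≤ 3 * t1 ^ 2 * t2 * (80 * U + 20 * (l - 1) ^ 2) := by
    have hT0 : t2 * (3 * (t1 - 1) ^ 2 * t1 ^ 2 + t1 ^ 2 * (4 * t2 ^ 2 - 4 * s + t1 ^ 2 + 3))
          - 4 * ((t1 * t2) ^ 2 + 3 * s * (t1 * t2) - 4 * s ^ 2)
        = t1 ^ 2 * t2 * (3 * (t1 - 1) ^ 2 + (t1 - t2) ^ 2 + 3 * (t2 - 1) ^ 2)
          + (t1 * t2) * (2 * ((2 * s - t1 * t2) * (1 - t1))) + 4 * (2 * s - t1 * t2) ^ 2 := by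
      ring
    rw [hT0]
    have piece1 : t1 ^ 2 * t2 * (3 * (t1 - 1) ^ 2 + (t1 - t2) ^ 2 + 3 * (t2 - 1) ^ 2)
        ≤ (155 / 100) * (14 * U + 12 * (l - 1) ^ 2) :=
      mul_le_mul ht1squb hbrk hbrknn (by norm_num)
    have hcross : 2 * ((2 * s - t1 * t2) * (1 - t1)) ≤ (2 * s - t1 * t2) ^ 2 + (1 - t1) ^ 2 := by
      linarith only [sq_nonneg ((2 * s - t1 * t2) - (1 - t1))]
    have piece2a : (t1 * t2) * (2 * ((2 * s - t1 * t2) * (1 - t1)))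
        ≤ (t1 * t2) * ((2 * s - t1 * t2) ^ 2 + (1 - t1) ^ 2) :=
      mul_le_mul_of_nonneg_left hcross hPnn
    have piece2b : (t1 * t2) * ((2 * s - t1 * t2) ^ 2 + (1 - t1) ^ 2)
        ≤ (134 / 100) * ((2 * s - t1 * t2) ^ 2 + (1 - t1) ^ 2) :=
      mul_le_mul_of_nonneg_right hPb (by positivity)
    have piece4 : (186 / 100) * (80 * U + 20 * (l - 1) ^ 2)
        ≤ 3 * t1 ^ 2 * t2 * (80 * U + 20 * (l - 1) ^ 2) := by
      have h62 : (186 : ℝ) / 100 ≤ 3 * (t1 ^ 2 * t2) := by linarith only [ht1sqlb]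
      have hrnn : (0:ℝ) ≤ 80 * U + 20 * (l - 1) ^ 2 := by positivity
      linarith only [mul_le_mul_of_nonneg_right h62 hrnn]
    linarith only [piece1, piece2a, piece2b, piece4, hwb, h1t1, sq_nonneg (l - 1), hUnn]
  have hpos : (0:ℝ) < 3 * t1 ^ 2 * t2 := by positivity
  have hexp : 3 * t1 ^ 2 * t2 *
        ((p - p / t1) ^ 2 + (q + r / t1) ^ 2 + (r - r / t1) ^ 2 + (m - p / t1) ^ 2)
      = t2 * (3 * ((p * t1 - p) ^ 2 + (q * t1 + r) ^ 2 + (r * t1 - r) ^ 2 + (m * t1 - p) ^ 2)) := by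
    field_simp
  have big : 3 * t1 ^ 2 * t2 *
        ((p - p / t1) ^ 2 + (q + r / t1) ^ 2 + (r - r / t1) ^ 2 + (m - p / t1) ^ 2)
      ≤ 3 * t1 ^ 2 * t2 * (80 * U + 20 * (l - 1) ^ 2) := by
    rw [hexp]
    calc t2 * (3 * ((p * t1 - p) ^ 2 + (q * t1 + r) ^ 2 + (r * t1 - r) ^ 2 + (m * t1 - p) ^ 2))
        = t2 * (3 * (t1 - 1) ^ 2 * t1 ^ 2 + t1 ^ 2 * (4 * t2 ^ 2 - 4 * s + t1 ^ 2 + 3))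
            - 4 * (s3 * D * (t1 * t2)) := by rw [hid]; ring
      _ ≤ t2 * (3 * (t1 - 1) ^ 2 * t1 ^ 2 + t1 ^ 2 * (4 * t2 ^ 2 - 4 * s + t1 ^ 2 + 3))
            - 4 * ((t1 * t2) ^ 2 + 3 * s * (t1 * t2) - 4 * s ^ 2) := by
          linarith only [hchord]
      _ ≤ 3 * t1 ^ 2 * t2 * (80 * U + 20 * (l - 1) ^ 2) := hkey2
  exact le_of_mul_le_mul_left big hpos

lemma so2_mem (a c : ℝ) (h : a * a + c * c = 1) :
    (Matrix.of ![![a, -c], ![c, a]]) ∈ SO2 := by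
  constructor
  · ext i j
    fin_cases i <;> fin_cases j <;>
      simp [Matrix.mul_apply, Fin.sum_univ_two, Matrix.one_apply, Matrix.transpose,
        Matrix.vecHead, Matrix.vecTail] <;>
      nlinarith [h]
  · rw [Matrix.det_fin_two]
    simp
    nlinarith [h]

lemma master (l : ℝ) (hl : 0 < l) (F : Matrix (Fin 2) (Fin 2) ℝ) (hdet : 0 ≤ F.det) :
    distToSet F SO2 ^ 2 ≤ 7000 * Wcell l F + 2100 * (l - 1) ^ 2 := by
  obtain ⟨t1, ht1d⟩ : ∃ x : ℝ, x = vnorm (F.mulVec (ebond 0)) := ⟨_, rfl⟩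
  obtain ⟨t2, ht2d⟩ : ∃ x : ℝ, x = vnorm (F.mulVec (ebond 1)) := ⟨_, rfl⟩
  obtain ⟨t3, ht3d⟩ : ∃ x : ℝ, x = vnorm (F.mulVec (ebond 2)) := ⟨_, rfl⟩
  have hs3 : Real.sqrt 3 ^ 2 = 3 := Real.sq_sqrt (by norm_num)
  have hs3p : 0 < Real.sqrt 3 := Real.sqrt_pos.2 (by norm_num)
  have e00 : F.mulVec (ebond 0) 0 = F 0 0 := by
    simp [Matrix.mulVec, dotProduct, ebond, Fin.sum_univ_two]
  have e01 : F.mulVec (ebond 0) 1 = F 1 0 := by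
    simp [Matrix.mulVec, dotProduct, ebond, Fin.sum_univ_two]
  have e10 : F.mulVec (ebond 1) 0 = F 0 0 / 2 + Real.sqrt 3 * F 0 1 / 2 := by
    simp [Matrix.mulVec, dotProduct, ebond, Fin.sum_univ_two]; ring
  have e11 : F.mulVec (ebond 1) 1 = F 1 0 / 2 + Real.sqrt 3 * F 1 1 / 2 := by
    simp [Matrix.mulVec, dotProduct, ebond, Fin.sum_univ_two]; ring
  have e20 : F.mulVec (ebond 2) 0 = F 0 0 / 2 + Real.sqrt 3 * F 0 1 / 2 - F 0 0 := by
    simp [Matrix.mulVec, dotProduct, ebond, Fin.sum_univ_two]; ring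
  have e21 : F.mulVec (ebond 2) 1 = F 1 0 / 2 + Real.sqrt 3 * F 1 1 / 2 - F 1 0 := by
    simp [Matrix.mulVec, dotProduct, ebond, Fin.sum_univ_two]; ring
  have ht1 : t1 ^ 2 = (F 0 0) ^ 2 + (F 1 0) ^ 2 := by
    rw [ht1d]; unfold vnorm; rw [Real.sq_sqrt (by positivity), e00, e01]
  have ht2 : t2 ^ 2 = (F 0 0 / 2 + Real.sqrt 3 * F 0 1 / 2) ^ 2
      + (F 1 0 / 2 + Real.sqrt 3 * F 1 1 / 2) ^ 2 := by
    rw [ht2d]; unfold vnorm; rw [Real.sq_sqrt (by positivity), e10, e11]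
  have ht3 : t3 ^ 2 = (F 0 0 / 2 + Real.sqrt 3 * F 0 1 / 2 - F 0 0) ^ 2
      + (F 1 0 / 2 + Real.sqrt 3 * F 1 1 / 2 - F 1 0) ^ 2 := by
    rw [ht3d]; unfold vnorm; rw [Real.sq_sqrt (by positivity), e20, e21]
  have ht1n : 0 ≤ t1 := by rw [ht1d]; exact Real.sqrt_nonneg _
  have ht2n : 0 ≤ t2 := by rw [ht2d]; exact Real.sqrt_nonneg _
  have ht3n : 0 ≤ t3 := by rw [ht3d]; exact Real.sqrt_nonneg _
  have hWc : Wcell l F = (t1 - l) ^ 2 + (t2 - l) ^ 2 + (t3 - l) ^ 2 := by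
    unfold Wcell; rw [← ht1d, ← ht2d, ← ht3d]
  have hWnn : 0 ≤ Wcell l F := by rw [hWc]; positivity
  have hdet2 : 0 ≤ F 0 0 * F 1 1 - F 0 1 * F 1 0 := by
    have hdf : F.det = F 0 0 * F 1 1 - F 0 1 * F 1 0 := Matrix.det_fin_two F
    linarith only [hdet, hdf.le, hdf.ge]
  have h1mem : (1 : Matrix (Fin 2) (Fin 2) ℝ) ∈ SO2 := ⟨by simp, by simp⟩
  have hsum : t1 ^ 2 + t2 ^ 2 + t3 ^ 2
      = 3 / 2 * ((F 0 0) ^ 2 + (F 0 1) ^ 2 + (F 1 0) ^ 2 + (F 1 1) ^ 2) := by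
    rw [ht1, ht2, ht3]
    linear_combination ((F 0 1) ^ 2 / 2 + (F 1 1) ^ 2 / 2) * hs3
  have hfr1 : frob (F - 1) ^ 2
      = (F 0 0 - 1) ^ 2 + (F 0 1) ^ 2 + (F 1 0) ^ 2 + (F 1 1 - 1) ^ 2 := by
    rw [frob_sq]
    simp [Fin.sum_univ_two, Matrix.sub_apply, Matrix.one_apply]
    ring
  have hE4 := easyE4 (F 0 0) (F 0 1) (F 1 0) (F 1 1) t1 t2 t3 l (Wcell l F) hsum hWc
  by_cases hg : (l - 1) ^ 2 ≤ 1 / 100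
  · obtain ⟨⟨hl9, hl11⟩, ⟨hlsq1, hlsq2⟩⟩ := lrange l hg
    by_cases hWb : Wcell l F ≤ l ^ 2 / 400
    · -- main case
      have h1 : (t1 - l) ^ 2 ≤ l ^ 2 / 400 := by
        linarith only [hWb, hWc, sq_nonneg (t2 - l), sq_nonneg (t3 - l)]
      obtain ⟨t1lb, -⟩ := tbound t1 l ht1n hl9 h1
      have ht1pos : 0 < t1 := by linarith only [t1lb, hl9]
      have ht1ne : t1 ≠ 0 := ne_of_gt ht1pos
      have hRunit : (F 0 0 / t1) * (F 0 0 / t1) + (F 1 0 / t1) * (F 1 0 / t1) = 1 := by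
        field_simp
        linear_combination -ht1
      have hRmem : (Matrix.of ![![F 0 0 / t1, -(F 1 0 / t1)], ![F 1 0 / t1, F 0 0 / t1]]) ∈ SO2 :=
        so2_mem (F 0 0 / t1) (F 1 0 / t1) hRunit
      have hfrR : frob (F - Matrix.of ![![F 0 0 / t1, -(F 1 0 / t1)], ![F 1 0 / t1, F 0 0 / t1]]) ^ 2
          = (F 0 0 - F 0 0 / t1) ^ 2 + (F 0 1 + F 1 0 / t1) ^ 2 + (F 1 0 - F 1 0 / t1) ^ 2
            + (F 1 1 - F 0 0 / t1) ^ 2 := by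
        rw [frob_sq]
        simp [Fin.sum_univ_two, Matrix.sub_apply]
        ring
      have hmain := mainineq (Real.sqrt 3) (F 0 0) (F 0 1) (F 1 0) (F 1 1) t1 t2 t3 l
        (Wcell l F) hs3 hs3p ht1 ht2 ht3 ht1n ht2n ht3n hdet2 hg hl hWc hWb
      have hd := dist_sq_le F _ hRmem
      rw [hfrR] at hd
      linarith only [hd, hmain, hWnn, sq_nonneg (l - 1)]
    · -- medium case
      push_neg at hWb
      have hd := dist_sq_le F 1 h1mem
      rw [hfr1] at hd
      linarith only [hd, hE4, hWb, hlsq1, sq_nonneg (l - 1)]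
  · -- far case
    push_neg at hg
    have hd := dist_sq_le F 1 h1mem
    rw [hfr1] at hd
    linarith only [hd, hE4, hg.le, lsq_far l, hWnn]

/-- For every `C₀ > 0` there exist constants `c > 0` and `c' > 0` such that for all
`ε ∈ (0,1]`, all `λ > 0` with `(1 − λ)² ≤ C₀ ε`, and all `F ∈ ℝ^{2×2}` with `det F ≥ 0`,
one has `W_λ(F) ≥ c · dist²(F, SO(2)) − c' · ε`. -/
theorem stmt2 (C₀ : ℝ) (hC₀ : 0 < C₀) :
    ∃ c : ℝ, 0 < c ∧ ∃ c' : ℝ, 0 < c' ∧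
      ∀ ε : ℝ, 0 < ε → ε ≤ 1 → ∀ l : ℝ, 0 < l → (1 - l) ^ 2 ≤ C₀ * ε →
        ∀ F : Matrix (Fin 2) (Fin 2) ℝ, 0 ≤ F.det →
          c * (distToSet F SO2) ^ 2 - c' * ε ≤ Wcell l F := by
  refine ⟨1 / 7000, by norm_num, (2100 * C₀ + 1) / 7000, by positivity, ?_⟩
  intro ε hε hε1 l hl hC F hdet
  have hm := master l hl F hdet
  have hg : (l - 1) ^ 2 ≤ C₀ * ε := by
    have he : (1 - l) ^ 2 = (l - 1) ^ 2 := by ring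
    linarith only [hC, he.le, he.ge]
  linarith only [hm, hg, hε.le]
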